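/- arXiv:nlin/0204037 — 3 statements merged into one kernel-verified Lean document; each statement's English description precedes it below -/
import Mathlib

section
/- In the universal enveloping algebra of osp(1|2), the element c₁ = h + 2v⁺v⁻ − 1/2 commutes with h and with X^±, and anticommutes with v^±: c₁ v^± = − v^± c₁. -/
/-- In the universal enveloping algebra of osp(1|2), the element
`c₁ = h + 2 v⁺v⁻ − 1/2` commutes with `h` and with `X^±`, and anticommutes
with `v^±`. -/
theorem osp12_c1_grading
    {A : Type*} [Ring A] [Algebra ℂ A]
    (h Xp Xm vp vm : A)
    (hhXp : h * Xp - Xp * h = 2 * Xp)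
    (hhXm : h * Xm - Xm * h = -(2 * Xm))
    (hXpXm : Xp * Xm - Xm * Xp = h)
    (hhvp : h * vp - vp * h = vp)
    (hhvm : h * vm - vm * h = -vm)
    (hvpvm : vp * vm + vm * vp = -h)
    (hXmvp : Xm * vp - vp * Xm = vm)
    (hXpvm : Xp * vm - vm * Xp = vp)
    (hvpvp : vp * vp + vp * vp = 2 * Xp)
    (hvmvm : vm * vm + vm * vm = -(2 * Xm))
    (hXpvp : Xp * vp - vp * Xp = 0)
    (hXmvm : Xm * vm - vm * Xm = 0) :
    (h + 2 * (vp * vm) - algebraMap ℂ A (1 / 2)) * h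
        = h * (h + 2 * (vp * vm) - algebraMap ℂ A (1 / 2)) ∧
    (h + 2 * (vp * vm) - algebraMap ℂ A (1 / 2)) * Xp
        = Xp * (h + 2 * (vp * vm) - algebraMap ℂ A (1 / 2)) ∧
    (h + 2 * (vp * vm) - algebraMap ℂ A (1 / 2)) * Xm
        = Xm * (h + 2 * (vp * vm) - algebraMap ℂ A (1 / 2)) ∧
    (h + 2 * (vp * vm) - algebraMap ℂ A (1 / 2)) * vp
        = -(vp * (h + 2 * (vp * vm) - algebraMap ℂ A (1 / 2))) ∧
    (h + 2 * (vp * vm) - algebraMap ℂ A (1 / 2)) * vm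
        = -(vm * (h + 2 * (vp * vm) - algebraMap ℂ A (1 / 2))) := by
  have commh := Algebra.commutes ((1:ℂ)/2) h
  have commXp := Algebra.commutes ((1:ℂ)/2) Xp
  have commXm := Algebra.commutes ((1:ℂ)/2) Xm
  have h2vp : algebraMap ℂ A (1/2) * vp + vp * algebraMap ℂ A (1/2) = vp := by
    rw [Algebra.commutes, ← mul_add, ← map_add]; norm_num
  have h2vm : algebraMap ℂ A (1/2) * vm + vm * algebraMap ℂ A (1/2) = vm := by
    rw [Algebra.commutes, ← mul_add, ← map_add]; norm_num
  refine ⟨?_, ?_, ?_, ?_, ?_⟩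
  · linear_combination (norm := noncomm_ring) (-2:A) * (vp * hhvm) - 2 * (hhvp * vm) - commh
  · linear_combination (norm := noncomm_ring) hhXp - 2 * (vp * hXpvm) - 2 * (hXpvp * vm) - hvpvp - commXp
  · linear_combination (norm := noncomm_ring) hhXm - 2 * (vp * hXmvm) - 2 * (hXmvp * vm) - hvmvm - commXm
  · linear_combination (norm := noncomm_ring) hhvp + 2 * (vp * hvpvm) - h2vp
  · linear_combination (norm := noncomm_ring) 2 * (hvpvm * vm) - hhvm - h2vm
end

section
/- The q-deformed Casimir element c₂(q) = ([h−1/2]_q)² − (q^{1/2}+q^{−1/2})² (v⁺)²(v⁻)² + (q^{h−1}+q^{−h+1}) v⁺v⁻ of U_q(osp(1|2)) satisfies c₂(q) = (c₁(q))², where c₁(q) = [h−1/2]_q + (q^{1/2}+q^{−1/2}) v⁺v⁻, provided c₁(q) commutes with h and anticommutes with v^±. -/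
set_option maxHeartbeats 1000000


/-- The q-deformed Casimir element
`c₂(q) = ([h−1/2]_q)² − (q^{1/2}+q^{−1/2})² (v⁺)²(v⁻)² + (q^{h−1}+q^{−h+1}) v⁺v⁻`
of `U_q(osp(1|2))` satisfies `c₂(q) = (c₁(q))²`, where
`c₁(q) = [h−1/2]_q + (q^{1/2}+q^{−1/2}) v⁺v⁻`, provided `c₁(q)` commutes with `h`
(here: with `q^{h−1/2}`) and anticommutes with `v^±`.

We work in an associative ℂ-algebra where `K` and `Kinv` realize `q^{h−1/2}` and
`q^{−h+1/2}` respectively, `s = q^{1/2}`, so that `[h−1/2]_q = (K − Kinv)/(q−q⁻¹)`,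
`q^{h} = s·K`, `q^{h−1} = s⁻¹·K`, and the relations `q^h v^± = q^{±1} v^± q^h` hold. -/
theorem osp12_q_casimir_sq
    {A : Type*} [Ring A] [Algebra ℂ A]
    (q s : ℂ) (hs : s ≠ 0) (hqs : q = s ^ 2) (hq : q ≠ 0) (hq1 : q ^ 2 ≠ 1)
    (K Kinv vp vm : A)
    (hKK : K * Kinv = 1) (hKK' : Kinv * K = 1)
    (hKvp : K * vp = q • (vp * K)) (hKvm : K * vm = q⁻¹ • (vm * K))
    (hKivp : Kinv * vp = q⁻¹ • (vp * Kinv)) (hKivm : Kinv * vm = q • (vm * Kinv))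
    (hvpvm : vp * vm + vm * vp = -((q - q⁻¹)⁻¹ • (s • K - s⁻¹ • Kinv)))
    (c₁ : A)
    (hc₁ : c₁ = (q - q⁻¹)⁻¹ • (K - Kinv) + (s + s⁻¹) • (vp * vm))
    (hc₁K : c₁ * K = K * c₁)
    (hc₁vp : c₁ * vp = -(vp * c₁)) (hc₁vm : c₁ * vm = -(vm * c₁)) :
    ((q - q⁻¹)⁻¹ • (K - Kinv)) ^ 2
      - ((s + s⁻¹) ^ 2) • (vp ^ 2 * vm ^ 2)
      + (s⁻¹ • K + s • Kinv) * (vp * vm) = c₁ ^ 2 := by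
  subst hqs
  have hq1' : (s ^ 2) ^ 2 - 1 ≠ 0 := sub_ne_zero.mpr hq1
  have h4 : s ^ 4 - 1 ≠ 0 := by
    intro h
    exact hq1 (by linear_combination h)
  have h5 : -1 + s ^ 4 ≠ 0 := by
    intro h
    exact h4 (by linear_combination h)
  have h6 : -s + s ^ 5 ≠ 0 := by
    have e : -s + s ^ 5 = s * (s ^ 4 - 1) := by ring
    rw [e]
    exact mul_ne_zero hs h4
  have hqq : s ^ 2 - (s ^ 2)⁻¹ ≠ 0 := by
    intro h
    apply hq1
    field_simp at h
    linear_combination h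
  have h1 : K * (vp * vm) = vp * vm * K := by
    rw [← mul_assoc, hKvp, smul_mul_assoc, mul_assoc, hKvm, mul_smul_comm, smul_smul,
      mul_inv_cancel₀ hq, one_smul, ← mul_assoc]
  have h2 : Kinv * (vp * vm) = vp * vm * Kinv := by
    rw [← mul_assoc, hKivp, smul_mul_assoc, mul_assoc, hKivm, mul_smul_comm, smul_smul,
      inv_mul_cancel₀ hq, one_smul, ← mul_assoc]
  have hmp : vm * vp = -((s ^ 2 - (s ^ 2)⁻¹)⁻¹ • (s • K - s⁻¹ • Kinv)) - vp * vm :=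
    eq_sub_of_add_eq' hvpvm
  have h3 : vp * vm * (vp * vm)
      = ((s ^ 2 - (s ^ 2)⁻¹)⁻¹ * (s⁻¹ * s ^ 2)) • (vp * vm * Kinv)
        - ((s ^ 2 - (s ^ 2)⁻¹)⁻¹ * (s * (s ^ 2)⁻¹)) • (vp * vm * K) - vp ^ 2 * vm ^ 2 := by
    have e : vp * vm * (vp * vm) = vp * (vm * vp) * vm := by
      noncomm_ring
    rw [e, hmp]
    simp only [mul_sub, sub_mul, mul_add, add_mul, mul_neg, neg_mul, smul_sub, smul_add,
      mul_smul_comm, smul_mul_assoc, smul_smul, mul_assoc]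
    rw [show vp * (K * vm) = (s ^ 2)⁻¹ • (vp * (vm * K)) by rw [hKvm, mul_smul_comm],
      show vp * (Kinv * vm) = s ^ 2 • (vp * (vm * Kinv)) by rw [hKivm, mul_smul_comm]]
    simp only [smul_smul, ← mul_assoc, ← pow_two]
    module
  rw [hc₁]
  simp only [sq, add_mul, mul_add, sub_mul, mul_sub, smul_mul_assoc, mul_smul_comm, smul_smul,
    smul_sub, smul_add, hKK, hKK', h1, h2, h3]
  match_scalars <;> field_simp <;> ring_nf <;> field_simp <;> ring
end

section
/- Under the relations {v⁺(λ),v⁺(μ)} = (2/sinh(λ−μ))(e^{λ−μ}X⁺(μ) − e^{−(λ−μ)}X⁺(λ)), [X⁺(λ),v⁺(μ)]=0, [X⁺(λ),X⁺(μ)]=0, the operators B_M defined by the recursion B_M(μ₁,…,μ_M) = v⁺(μ₁)B_{M−1}(μ₂,…,μ_M) + 2X⁺(μ₁)Σ_{j=2}^M (−1)^j (e^{−(μ₁−μ_j)}/sinh(μ₁−μ_j)) B_{M−2}^{(j)} satisfy v⁺(λ) B_M = (−1)^M B_M v⁺(λ) + 2 Σ_{j=1}^M ((−1)^j / sinh(λ−μ_j))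 ( e^{−(λ−μ_j)} X⁺(λ) − e^{λ−μ_j} X⁺(μ_j) ) B_{M−1}^{(j)}. -/
/-!
Induction on `M` along the recursion for `B_M`. Moving `v⁺(λ)` past the leading `v⁺(μ₁)` costs
the anticommutator, which produces the `j = 1` term; `X⁺(λ)` and `X⁺(μ₁)` commute with everything
in sight, and the inductive hypothesis applies to `B_{M-1}(μ₂,…,μ_M)` and to every `B_{M-2}^{(j)}`.
What is left are two double sums over ordered pairs of removed positions, one from the inductive
hypothesis applied inside the recursion and one from expanding the `B_{M-1}^{(j)}` of the claimed
formula by the recursion; reindexing one by the other order of removal shows that they cancel.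
-/

/-- The creation operators `B_M` of the trigonometric osp(1|2) Gaudin model,
defined by the recursion
`B_M(μ₁,…,μ_M) = v⁺(μ₁)B_{M−1}(μ₂,…,μ_M)
  + 2X⁺(μ₁) Σ_{j=2}^{M} (−1)^j (e^{−(μ₁−μ_j)}/sinh(μ₁−μ_j)) B_{M−2}^{(j)}`,
with `B₀ = 1`, encoded on lists of spectral parameters. -/
noncomputable def gaudinB {A : Type*} [Ring A] [Algebra ℂ A]
    (vp Xp : ℂ → A) : List ℂ → A
  | [] => 1
  | μ :: rest =>
      vp μ * gaudinB vp Xp rest +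
        2 * Xp μ * ∑ k : Fin rest.length,
          ((-1 : ℂ) ^ (k : ℕ) *
              (Complex.exp (-(μ - rest.get k)) / Complex.sinh (μ - rest.get k))) •
            gaudinB vp Xp (rest.eraseIdx (k : ℕ))
termination_by l => l.length
decreasing_by
  · simp
  · simp [List.length_eraseIdx]
    try omega

namespace List

variable {α : Type*}

theorem getD_eraseIdx_of_lt (l : List α) {i j : ℕ} (h : j < i) (d : α) :
    (l.eraseIdx i).getD j d = l.getD j d := by
  simp only [getD_eq_getElem?_getD, getElem?_eraseIdx_of_lt h]

theorem getD_eraseIdx_of_ge (l : List α) {i j : ℕ} (h : i ≤ j) (d : α) :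
    (l.eraseIdx i).getD j d = l.getD (j + 1) d := by
  simp only [getD_eq_getElem?_getD, getElem?_eraseIdx_of_ge h]

theorem eraseIdx_succ_eraseIdx_of_le (l : List α) {p q : ℕ} (h : p ≤ q) :
    (l.eraseIdx (q + 1)).eraseIdx p = (l.eraseIdx p).eraseIdx q := by
  induction l generalizing p q with
  | nil => simp
  | cons a t ih =>
    match p, q with
    | 0, q => simp
    | p + 1, q + 1 => simp [ih (Nat.le_of_succ_le_succ h)]

end List

namespace Finset

/-- A pair `(k, i)` stands for erasing position `k` of a list and then position `i` of the
remainder; the summand on the left erases the same two positions in the other order. -/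
theorem sum_range_sum_range_swap_erasures {M : Type*} [AddCommMonoid M] (m : ℕ)
    (g : ℕ → ℕ → M) :
    ∑ k ∈ range (m + 1), ∑ i ∈ range m, (if i < k then g i (k - 1) else g (i + 1) k)
      = ∑ k ∈ range (m + 1), ∑ i ∈ range m, g k i := by
  set swap : ℕ × ℕ → ℕ × ℕ := fun p => if p.2 < p.1 then (p.2, p.1 - 1) else (p.2 + 1, p.1)
  have hswap : ∀ p ∈ range (m + 1) ×ˢ range m, swap p ∈ range (m + 1) ×ˢ range m := by
    rintro ⟨k, i⟩ hp
    simp only [swap, mem_product, mem_range] at hp ⊢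
    split <;> omega
  have hinv : ∀ p ∈ range (m + 1) ×ˢ range m, swap (swap p) = p := by
    rintro ⟨k, i⟩ hp
    simp only [mem_product, mem_range] at hp
    dsimp only [swap]
    by_cases h : i < k
    · simp only [h, if_true, show ¬k - 1 < i by omega, if_false, Prod.mk.injEq, and_true]; omega
    · simp only [h, if_false, show k < i + 1 by omega, if_true, Prod.mk.injEq, true_and]; omega
  rw [← sum_product', ← sum_product']
  refine sum_nbij' swap swap hswap hswap hinv hinv fun p _ => ?_
  simp only [swap]
  split <;> rfl

end Finset

open Finset

namespace Osp12

variable {A : Type*} [Ring A] [Algebra ℂ A] (vp Xp : ℂ → A)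

-- Positions are 0-based: position `k` of `r` in `recSum μ r` is the paper's `j = k + 2`, and
-- position `j` of `l` in `commSum lam l` is the paper's `j + 1`.
noncomputable def recCoeff (μ x : ℂ) (k : ℕ) : ℂ :=
  (-1) ^ k * (Complex.exp (-(μ - x)) / Complex.sinh (μ - x))

noncomputable def commCoeff (lam x : ℂ) (j : ℕ) : ℂ :=
  (-1) ^ (j + 1) / Complex.sinh (lam - x)

noncomputable def commOp (lam x : ℂ) : A :=
  Complex.exp (-(lam - x)) • Xp lam - Complex.exp (lam - x) • Xp x

noncomputable def recSum (μ : ℂ) (l : List ℂ) : A :=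
  ∑ k ∈ range l.length, recCoeff μ (l.getD k 0) k • gaudinB vp Xp (l.eraseIdx k)

noncomputable def commSum (lam : ℂ) (l : List ℂ) : A :=
  ∑ j ∈ range l.length,
    commCoeff lam (l.getD j 0) j • (commOp Xp lam (l.getD j 0) * gaudinB vp Xp (l.eraseIdx j))

theorem recCoeff_succ (μ x : ℂ) (k : ℕ) : recCoeff μ x (k + 1) = -recCoeff μ x k := by
  simp only [recCoeff, pow_succ]; ring

theorem commCoeff_succ (lam x : ℂ) (j : ℕ) : commCoeff lam x (j + 1) = -commCoeff lam x j := by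
  simp only [commCoeff, pow_succ]; ring

theorem gaudinB_nil : gaudinB vp Xp [] = 1 := by
  rw [gaudinB]

theorem gaudinB_cons (μ : ℂ) (r : List ℂ) :
    gaudinB vp Xp (μ :: r) = vp μ * gaudinB vp Xp r + (2 : ℂ) • (Xp μ * recSum vp Xp μ r) := by
  rw [gaudinB, recSum, ← Fin.sum_univ_eq_sum_range, mul_assoc, two_mul, two_smul]
  simp only [mul_sum, mul_smul_comm, recCoeff, List.get_eq_getElem,
    List.getD_eq_getElem _ _ (Fin.isLt _)]

variable {vp Xp}

theorem commute_commOp {a : A} (h : ∀ y, Commute (Xp y) a) (lam x : ℂ) :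
    Commute (commOp Xp lam x) a :=
  ((h lam).smul_left _).sub_left ((h x).smul_left _)

theorem vp_mul_vp
    (hvv : ∀ x y : ℂ, Complex.sinh (x - y) ≠ 0 →
      vp x * vp y + vp y * vp x =
        (2 / Complex.sinh (x - y)) •
          (Complex.exp (x - y) • Xp y - Complex.exp (-(x - y)) • Xp x))
    {lam μ : ℂ} (hs : Complex.sinh (lam - μ) ≠ 0) :
    vp lam * vp μ = (2 : ℂ) • (commCoeff lam μ 0 • commOp Xp lam μ) - vp μ * vp lam := by
  rw [eq_sub_of_add_eq (hvv lam μ hs), commCoeff, commOp, smul_smul]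
  match_scalars <;> ring

theorem vp_mul_recSum {lam μ : ℂ} {r : List ℂ}
    (ih : ∀ k < r.length, vp lam * gaudinB vp Xp (r.eraseIdx k)
      = (-1 : ℂ) ^ (r.eraseIdx k).length • (gaudinB vp Xp (r.eraseIdx k) * vp lam)
        + (2 : ℂ) • commSum vp Xp lam (r.eraseIdx k)) :
    vp lam * recSum vp Xp μ r
      = (-1 : ℂ) ^ (r.length + 1) • (recSum vp Xp μ r * vp lam)
        + (2 : ℂ) • ∑ k ∈ range r.length,
            recCoeff μ (r.getD k 0) k • commSum vp Xp lam (r.eraseIdx k) := by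
  simp only [recSum, mul_sum, sum_mul, mul_smul_comm, smul_mul_assoc, smul_sum,
    ← sum_add_distrib]
  refine sum_congr rfl fun k hk => ?_
  have hk := mem_range.mp hk
  have hsign : (-1 : ℂ) ^ (r.eraseIdx k).length = (-1) ^ (r.length + 1) := by
    rw [List.length_eraseIdx_of_lt hk, ← Nat.sub_add_cancel (Nat.one_le_of_lt hk)]
    simp [pow_succ]
  rw [ih k hk, hsign]
  module

theorem commSum_cons (hXv : ∀ x y : ℂ, Xp x * vp y = vp y * Xp x)
    (hXX : ∀ x y : ℂ, Xp x * Xp y = Xp y * Xp x) (lam μ : ℂ) (r : List ℂ) :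
    commSum vp Xp lam (μ :: r)
      = commCoeff lam μ 0 • (commOp Xp lam μ * gaudinB vp Xp r) - vp μ * commSum vp Xp lam r
        - (2 : ℂ) • (Xp μ * ∑ j ∈ range r.length, commCoeff lam (r.getD j 0) j •
            (commOp Xp lam (r.getD j 0) * recSum vp Xp μ (r.eraseIdx j))) := by
  have hv : ∀ x (a : A), commOp Xp lam x * (vp μ * a) = vp μ * (commOp Xp lam x * a) :=
    fun x => (commute_commOp (fun y => hXv y μ) lam x).left_comm
  have hX : ∀ x (a : A), commOp Xp lam x * (Xp μ * a) = Xp μ * (commOp Xp lam x * a) :=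
    fun x => (commute_commOp (fun y => hXX y μ) lam x).left_comm
  rw [commSum, List.length_cons, sum_range_succ']
  simp only [List.getD_cons_zero, List.getD_cons_succ, List.eraseIdx_cons_zero,
    List.eraseIdx_cons_succ, gaudinB_cons, commCoeff_succ, commSum, mul_add, mul_smul_comm,
    hv, hX, mul_sum, neg_smul, sum_neg_distrib, smul_add, sum_add_distrib,
    smul_comm (commCoeff lam _ _) (2 : ℂ), ← smul_sum]
  abel

theorem sum_recCoeff_smul_commSum_eraseIdx (lam μ : ℂ) (r : List ℂ) :
    ∑ k ∈ range r.length, recCoeff μ (r.getD k 0) k • commSum vp Xp lam (r.eraseIdx k)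
      = -∑ j ∈ range r.length, commCoeff lam (r.getD j 0) j •
          (commOp Xp lam (r.getD j 0) * recSum vp Xp μ (r.eraseIdx j)) := by
  obtain _ | ⟨a, t⟩ := r
  · simp
  set l := a :: t
  have hlen : ∀ k ∈ range (t.length + 1), (l.eraseIdx k).length = t.length := fun k hk =>
    List.length_eraseIdx_of_lt (mem_range.mp hk)
  set g : ℕ → ℕ → A := fun j i =>
    -((commCoeff lam (l.getD j 0) j * recCoeff μ ((l.eraseIdx j).getD i 0) i) •
      (commOp Xp lam (l.getD j 0) * gaudinB vp Xp ((l.eraseIdx j).eraseIdx i)))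
  calc _ = ∑ k ∈ range (t.length + 1), ∑ i ∈ range t.length,
        (if i < k then g i (k - 1) else g (i + 1) k) := by
        refine sum_congr rfl fun k hk => ?_
        rw [commSum, hlen k hk, smul_sum]
        refine sum_congr rfl fun i _ => ?_
        split_ifs with hik <;> dsimp only [g]
        · obtain ⟨k, rfl⟩ : ∃ k', k = k' + 1 := ⟨k - 1, by omega⟩
          rw [Nat.add_sub_cancel, l.getD_eraseIdx_of_lt hik,
            l.getD_eraseIdx_of_ge (Nat.le_of_lt_succ hik),
            l.eraseIdx_succ_eraseIdx_of_le (Nat.le_of_lt_succ hik),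
            recCoeff_succ, smul_smul, ← neg_smul]
          congr 1; ring
        · have hki := not_lt.mp hik
          rw [l.getD_eraseIdx_of_ge hki, l.getD_eraseIdx_of_lt (Nat.lt_succ_of_le hki),
            ← l.eraseIdx_succ_eraseIdx_of_le hki, commCoeff_succ, smul_smul, ← neg_smul]
          congr 1; ring
    _ = ∑ j ∈ range (t.length + 1), ∑ i ∈ range t.length, g j i :=
        sum_range_sum_range_swap_erasures t.length g
    _ = _ := by
        rw [← sum_neg_distrib]
        refine sum_congr rfl fun j hj => ?_
        simp only [g, recSum, hlen j hj, mul_sum, mul_smul_comm, smul_sum, smul_smul,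
          sum_neg_distrib]

theorem vp_mul_gaudinB
    (hvv : ∀ x y : ℂ, Complex.sinh (x - y) ≠ 0 →
      vp x * vp y + vp y * vp x =
        (2 / Complex.sinh (x - y)) •
          (Complex.exp (x - y) • Xp y - Complex.exp (-(x - y)) • Xp x))
    (hXv : ∀ x y : ℂ, Xp x * vp y = vp y * Xp x)
    (hXX : ∀ x y : ℂ, Xp x * Xp y = Xp y * Xp x) (lam : ℂ) :
    ∀ l : List ℂ, (∀ μ ∈ l, Complex.sinh (lam - μ) ≠ 0) →
      vp lam * gaudinB vp Xp l
        = (-1 : ℂ) ^ l.length • (gaudinB vp Xp l * vp lam) + (2 : ℂ) • commSum vp Xp lam l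
  | [], _ => by simp [gaudinB_nil, commSum]
  | μ :: r, hl => by
    have ih := vp_mul_gaudinB hvv hXv hXX lam r fun x hx => hl x (List.mem_cons_of_mem μ hx)
    have ih' : ∀ k < r.length, _ := fun k (_ : k < r.length) =>
      vp_mul_gaudinB hvv hXv hXX lam (r.eraseIdx k)
        fun x hx => hl x (List.mem_cons_of_mem μ (List.eraseIdx_subset hx))
    have hcomm : Commute (vp lam) (Xp μ) := (hXv μ lam).symm
    rw [gaudinB_cons, mul_add, ← mul_assoc, vp_mul_vp hvv (hl μ List.mem_cons_self),
      mul_smul_comm, hcomm.left_comm, vp_mul_recSum ih', sum_recCoeff_smul_commSum_eraseIdx,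
      sub_mul, mul_assoc, ih, commSum_cons hXv hXX, List.length_cons]
    simp only [add_mul, smul_mul_assoc, mul_assoc, mul_add, mul_smul_comm, mul_neg]
    module
termination_by l => l.length
decreasing_by
  · simp
  · simp only [List.length_cons]
    exact (List.length_eraseIdx_le r k).trans_lt (Nat.lt_succ_self _)

end Osp12

theorem osp12_vp_B_commutation_general
    {A : Type*} [Ring A] [Algebra ℂ A]
    (vp Xp : ℂ → A)
    (hvv : ∀ x y : ℂ, Complex.sinh (x - y) ≠ 0 →
      vp x * vp y + vp y * vp x =
        (2 / Complex.sinh (x - y)) •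
          (Complex.exp (x - y) • Xp y - Complex.exp (-(x - y)) • Xp x))
    (hXv : ∀ x y : ℂ, Xp x * vp y = vp y * Xp x)
    (hXX : ∀ x y : ℂ, Xp x * Xp y = Xp y * Xp x)
    (l : List ℂ)
    (lam : ℂ)
    (hlam : ∀ μ ∈ l, lam ≠ μ ∧ Complex.sinh (lam - μ) ≠ 0) :
    vp lam * gaudinB vp Xp l
      = ((-1 : ℂ) ^ l.length) • (gaudinB vp Xp l * vp lam)
        + 2 * ∑ j : Fin l.length,
            (((-1 : ℂ) ^ ((j : ℕ) + 1)) / Complex.sinh (lam - l.get j)) •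
              ((Complex.exp (-(lam - l.get j)) • Xp lam
                  - Complex.exp (lam - l.get j) • Xp (l.get j)) *
                gaudinB vp Xp (l.eraseIdx (j : ℕ))) := by
  rw [Osp12.vp_mul_gaudinB hvv hXv hXX lam l fun μ hμ => (hlam μ hμ).2, two_smul, two_mul,
    Osp12.commSum, ← Fin.sum_univ_eq_sum_range]
  simp only [Osp12.commCoeff, Osp12.commOp, List.get_eq_getElem,
    List.getD_eq_getElem _ _ (Fin.isLt _)]

/-- Commutation of `v⁺(λ)` through the creation operator `B_M`:
`v⁺(λ) B_M = (−1)^M B_M v⁺(λ)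
  + 2 Σ_{j=1}^M ((−1)^j / sinh(λ−μ_j)) (e^{−(λ−μ_j)} X⁺(λ) − e^{λ−μ_j} X⁺(μ_j)) B_{M−1}^{(j)}`. -/
theorem osp12_vp_B_commutation
    {A : Type*} [Ring A] [Algebra ℂ A]
    (vp Xp : ℂ → A)
    (hvv : ∀ x y : ℂ, Complex.sinh (x - y) ≠ 0 →
      vp x * vp y + vp y * vp x =
        (2 / Complex.sinh (x - y)) •
          (Complex.exp (x - y) • Xp y - Complex.exp (-(x - y)) • Xp x))
    (hXv : ∀ x y : ℂ, Xp x * vp y = vp y * Xp x)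
    (hXX : ∀ x y : ℂ, Xp x * Xp y = Xp y * Xp x)
    (l : List ℂ)
    (hdist : l.Pairwise (fun x y => x ≠ y ∧ Complex.sinh (x - y) ≠ 0))
    (lam : ℂ)
    (hlam : ∀ μ ∈ l, lam ≠ μ ∧ Complex.sinh (lam - μ) ≠ 0) :
    vp lam * gaudinB vp Xp l
      = ((-1 : ℂ) ^ l.length) • (gaudinB vp Xp l * vp lam)
        + 2 * ∑ j : Fin l.length,
            (((-1 : ℂ) ^ ((j : ℕ) + 1)) / Complex.sinh (lam - l.get j)) •
              ((Complex.exp (-(lam - l.get j)) • Xp lam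
                  - Complex.exp (lam - l.get j) • Xp (l.get j)) *
                gaudinB vp Xp (l.eraseIdx (j : ℕ))) :=
  osp12_vp_B_commutation_general vp Xp hvv hXv hXX l lam hlam
end
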